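/- There exists a finite constant C > 0 such that for every nonnegative measurable function f₁ on ℝ and every measurable set F ⊆ ℝ of finite Lebesgue measure, ‖T(f₁, χ_F)‖_∞ ≤ C ‖f₁‖_∞ |F|^{1/2}; that is, in dimension n = 2 the operator T is of restricted type at the point E = (0, 1/2; 0). -/

import Mathlib

open MeasureTheory ENNReal

/-- The `L^p` "norm" (with respect to Lebesgue measure on `ℝ`) of an
`ℝ≥0∞`-valued function, with the convention for `p = ∞`. -/
noncomputable def lpNorm (p : ℝ≥0∞) (g : ℝ → ℝ≥0∞) : ℝ≥0∞ :=
  if p = ∞ then essSup g (volume : Measure ℝ)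
  else (∫⁻ x, g x ^ p.toReal) ^ (1 / p.toReal)

/-- The bilinear spherical average in dimension `n = 2`:
`T(f₁,f₂)(x) = (1/(2π)) ∫₀^{2π} f₁(x − cos t) f₂(x − sin t) dt`. -/
noncomputable def T2 (f₁ f₂ : ℝ → ℝ) (x : ℝ) : ℝ≥0∞ :=
  (ENNReal.ofReal (2 * Real.pi))⁻¹ *
    ∫⁻ t in Set.Ioc 0 (2 * Real.pi),
      ENNReal.ofReal (f₁ (x - Real.cos t)) * ENNReal.ofReal (f₂ (x - Real.sin t))

/-!
For a.e. `t` we have `f₁ (x - cos t) ≤ ‖f₁‖_∞`, because the image of Lebesgue measure on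
`(0, 2π]` under `cos` is absolutely continuous. It therefore suffices to bound
`∫₀^{2π} χ_E (sin t) dt` for the translate `E = x - F`. On each of the four quarter periods
`sin` is injective with `|sin'| = √(1 - sin²) ≠ 0`, so the substitution `y = sin t` bounds this
by `4 ∫_E (1 - y²)^{-1/2} dy`. The arcsine weight `(1 - y²)^{-1/2}` is at most `δ^{-1/2}` on
`|y| ≤ 1 - δ` and has integral `O(√δ)` over the edges `1 - δ < |y| < 1`; taking
`δ = min 1 |E|` gives `∫_E (1 - y²)^{-1/2} dy ≤ 5 |E|^{1/2}`.
-/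

open Set Real

-- `(1 - y²)^(-1/2)` on `(-1, 1)`; since `√` of a negative number and `0⁻¹` are `0`, it vanishes
-- for `|y| ≥ 1`.
noncomputable def arcsineWeight (y : ℝ) : ℝ≥0∞ := ENNReal.ofReal (√(1 - y ^ 2))⁻¹

theorem arcsineWeight_neg (y : ℝ) : arcsineWeight (-y) = arcsineWeight y := by
  simp [arcsineWeight]

theorem arcsineWeight_le_ofReal_inv {a y : ℝ} (ha : 0 < a) (h : a ^ 2 ≤ 1 - y ^ 2) :
    arcsineWeight y ≤ ENNReal.ofReal a⁻¹ :=
  ENNReal.ofReal_le_ofReal (inv_anti₀ ha (Real.le_sqrt_of_sq_le h))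

theorem arcsineWeight_eq_zero_of_one_le_abs {y : ℝ} (hy : 1 ≤ |y|) : arcsineWeight y = 0 := by
  have : 1 - y ^ 2 ≤ 0 := by nlinarith [sq_abs y]
  simp [arcsineWeight, Real.sqrt_eq_zero_of_nonpos this]

theorem setLIntegral_Ioo_one_sub_arcsineWeight_le {δ : ℝ} (hδ : δ ≤ 1) :
    ∫⁻ y in Ioo (1 - δ) 1, arcsineWeight y ≤ ENNReal.ofReal (2 * √δ) := by
  have hsub : Ioo (1 - δ) 1 ⊆ (fun u => 1 - u ^ 2) '' Ioo 0 √δ := by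
    intro y hy
    have hy0 : 0 ≤ 1 - y := by linarith [hy.2]
    refine ⟨√(1 - y), ⟨Real.sqrt_pos.2 (by linarith [hy.2]),
      Real.sqrt_lt_sqrt hy0 (by linarith [hy.1])⟩, ?_⟩
    simp [Real.sq_sqrt hy0]
  have hinj : InjOn (fun u : ℝ => 1 - u ^ 2) (Ioo 0 √δ) := fun u hu v hv huv =>
    (sq_eq_sq₀ hu.1.le hv.1.le).1 (by simpa using huv)
  have hderiv : ∀ u, HasDerivAt (fun u : ℝ => 1 - u ^ 2) (-(2 * u)) u := fun u => by
    simpa using (hasDerivAt_pow 2 u).const_sub 1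
  have hbound : ∀ u ∈ Ioo 0 √δ,
      ENNReal.ofReal |-(2 * u)| * arcsineWeight (1 - u ^ 2) ≤ 2 := by
    -- the Jacobian `2u` of `y = 1 - u²` cancels the singularity `arcsineWeight (1 - u²) ≤ 1/u`
    intro u hu
    have hu1 : u ^ 2 ≤ 1 := by nlinarith [(Real.lt_sqrt hu.1.le).1 hu.2]
    calc ENNReal.ofReal |-(2 * u)| * arcsineWeight (1 - u ^ 2)
        ≤ ENNReal.ofReal (2 * u) * ENNReal.ofReal u⁻¹ := by
          rw [abs_neg, abs_of_pos (by linarith [hu.1])]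
          gcongr
          exact arcsineWeight_le_ofReal_inv hu.1 (by nlinarith)
      _ = 2 := by
          rw [← ENNReal.ofReal_mul (by linarith [hu.1]), mul_assoc, mul_inv_cancel₀ hu.1.ne']
          norm_num
  calc ∫⁻ y in Ioo (1 - δ) 1, arcsineWeight y
      ≤ ∫⁻ y in (fun u => 1 - u ^ 2) '' Ioo 0 √δ, arcsineWeight y := lintegral_mono_set hsub
    _ = ∫⁻ u in Ioo 0 √δ, ENNReal.ofReal |-(2 * u)| * arcsineWeight (1 - u ^ 2) :=
        lintegral_image_eq_lintegral_abs_deriv_mul measurableSet_Ioo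
          (fun u _ => (hderiv u).hasDerivWithinAt) hinj _
    _ ≤ ∫⁻ _ in Ioo 0 √δ, 2 := setLIntegral_mono measurable_const hbound
    _ = ENNReal.ofReal (2 * √δ) := by
        rw [setLIntegral_const, Real.volume_Ioo, sub_zero, ENNReal.ofReal_mul zero_le_two]
        norm_num

theorem setLIntegral_Ioo_neg_one_arcsineWeight_le {δ : ℝ} (hδ : δ ≤ 1) :
    ∫⁻ y in Ioo (-1) (δ - 1), arcsineWeight y ≤ ENNReal.ofReal (2 * √δ) := by
  rw [← (Measure.measurePreserving_neg volume).setLIntegral_comp_preimage_emb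
    (Homeomorph.neg ℝ).measurableEmbedding, neg_preimage, neg_Ioo, neg_sub, neg_neg]
  simpa only [arcsineWeight_neg] using setLIntegral_Ioo_one_sub_arcsineWeight_le hδ

theorem setLIntegral_one_sub_lt_abs_arcsineWeight_le {δ : ℝ} (hδ : δ ≤ 1) :
    ∫⁻ y in {y | 1 - δ < |y|}, arcsineWeight y ≤ ENNReal.ofReal (4 * √δ) := by
  have hcover : {y : ℝ | 1 - δ < |y|} ⊆ (Ioo (-1) (δ - 1) ∪ Ioo (1 - δ) 1) ∪ {y | 1 ≤ |y|} := by
    intro y hy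
    simp only [mem_ofPred_eq, mem_union, mem_Ioo] at hy ⊢
    rcases le_or_gt 1 |y| with h | h
    · exact Or.inr h
    · rcases le_or_gt 0 y with hy0 | hy0
      · rw [abs_of_nonneg hy0] at hy h
        exact Or.inl (Or.inr ⟨hy, h⟩)
      · rw [abs_of_neg hy0] at hy h
        exact Or.inl (Or.inl ⟨by linarith, by linarith⟩)
  have hzero : ∫⁻ y in {y : ℝ | 1 ≤ |y|}, arcsineWeight y = 0 := by
    rw [setLIntegral_congr_fun (measurableSet_le measurable_const continuous_abs.measurable)
      fun y (hy : 1 ≤ |y|) => arcsineWeight_eq_zero_of_one_le_abs hy, lintegral_zero]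
  calc ∫⁻ y in {y | 1 - δ < |y|}, arcsineWeight y
      ≤ (∫⁻ y in Ioo (-1) (δ - 1), arcsineWeight y) + (∫⁻ y in Ioo (1 - δ) 1, arcsineWeight y)
          + ∫⁻ y in {y : ℝ | 1 ≤ |y|}, arcsineWeight y :=
        (lintegral_mono_set hcover).trans <| (lintegral_union_le _ _ _).trans
          (add_le_add (lintegral_union_le _ _ _) le_rfl)
    _ ≤ ENNReal.ofReal (2 * √δ) + ENNReal.ofReal (2 * √δ) + 0 := by
        gcongr
        exacts [setLIntegral_Ioo_neg_one_arcsineWeight_le hδ,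
          setLIntegral_Ioo_one_sub_arcsineWeight_le hδ, hzero.le]
    _ = ENNReal.ofReal (4 * √δ) := by
        rw [add_zero, ← ENNReal.ofReal_add (by positivity) (by positivity)]
        ring_nf

theorem setLIntegral_arcsineWeight_le_of_le_one (E : Set ℝ) {δ : ℝ} (hδ0 : 0 < δ) (hδ1 : δ ≤ 1) :
    ∫⁻ y in E, arcsineWeight y ≤
      ENNReal.ofReal (√δ)⁻¹ * volume (E ∩ {y | |y| ≤ 1 - δ}) + ENNReal.ofReal (4 * √δ) := by
  have hmiddle : ∀ y ∈ E ∩ {y | |y| ≤ 1 - δ}, arcsineWeight y ≤ ENNReal.ofReal (√δ)⁻¹ := by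
    intro y hy
    refine arcsineWeight_le_ofReal_inv (Real.sqrt_pos.2 hδ0) ?_
    have hy' : |y| ≤ 1 - δ := hy.2
    nlinarith [Real.sq_sqrt hδ0.le, sq_abs y, abs_nonneg y]
  have hcover : E ⊆ (E ∩ {y | |y| ≤ 1 - δ}) ∪ {y | 1 - δ < |y|} := fun y hy =>
    (le_or_gt |y| (1 - δ)).imp (fun h => ⟨hy, h⟩) id
  calc ∫⁻ y in E, arcsineWeight y
      ≤ (∫⁻ y in E ∩ {y | |y| ≤ 1 - δ}, arcsineWeight y)
          + ∫⁻ y in {y | 1 - δ < |y|}, arcsineWeight y :=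
        (lintegral_mono_set hcover).trans (lintegral_union_le _ _ _)
    _ ≤ (∫⁻ _ in E ∩ {y | |y| ≤ 1 - δ}, ENNReal.ofReal (√δ)⁻¹) + ENNReal.ofReal (4 * √δ) :=
        add_le_add (setLIntegral_mono measurable_const hmiddle)
          (setLIntegral_one_sub_lt_abs_arcsineWeight_le hδ1)
    _ = _ := by rw [setLIntegral_const]

theorem setLIntegral_arcsineWeight_le (E : Set ℝ) :
    ∫⁻ y in E, arcsineWeight y ≤ 5 * volume E ^ (1 / 2 : ℝ) := by
  rcases eq_or_ne (volume E) 0 with hE0 | hE0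
  · rw [setLIntegral_measure_zero _ _ hE0]
    exact zero_le
  rcases le_or_gt 1 (volume E) with hE1 | hE1
  · have hnull : volume (E ∩ {0}) = 0 := measure_mono_null inter_subset_right (measure_singleton 0)
    calc ∫⁻ y in E, arcsineWeight y ≤ ENNReal.ofReal (4 * √1) := by
          simpa [hnull] using setLIntegral_arcsineWeight_le_of_le_one E one_pos le_rfl
      _ ≤ 5 * 1 := by norm_num
      _ ≤ 5 * volume E ^ (1 / 2 : ℝ) := by gcongr; exact ENNReal.one_le_rpow hE1 (by norm_num)
  · set δ := (volume E).toReal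
    have hδ : volume E = ENNReal.ofReal δ := (ENNReal.ofReal_toReal hE1.ne_top).symm
    have hδ0 : 0 < δ := ENNReal.toReal_pos hE0 hE1.ne_top
    have hδ1 : δ ≤ 1 := ENNReal.toReal_le_of_le_ofReal zero_le_one (by simpa using hE1.le)
    calc ∫⁻ y in E, arcsineWeight y
        ≤ ENNReal.ofReal (√δ)⁻¹ * volume (E ∩ {y | |y| ≤ 1 - δ}) + ENNReal.ofReal (4 * √δ) :=
          setLIntegral_arcsineWeight_le_of_le_one E hδ0 hδ1
      _ ≤ ENNReal.ofReal (√δ)⁻¹ * ENNReal.ofReal δ + ENNReal.ofReal (4 * √δ) := by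
          gcongr
          exact hδ ▸ measure_mono inter_subset_left
      _ = 5 * ENNReal.ofReal √δ := by
          rw [← ENNReal.ofReal_mul (by positivity), inv_mul_eq_div, Real.div_sqrt,
            ← ENNReal.ofReal_add (by positivity) (by positivity), ← ENNReal.ofReal_ofNat 5,
            ← ENNReal.ofReal_mul (by norm_num)]
          ring_nf
      _ = 5 * volume E ^ (1 / 2 : ℝ) := by
          rw [hδ, ENNReal.ofReal_rpow_of_nonneg hδ0.le (by norm_num), Real.sqrt_eq_rpow]

theorem injOn_Ioo_of_hasDerivAt_ne_zero {φ φ' : ℝ → ℝ} (hφ : ∀ t, HasDerivAt φ (φ' t) t)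
    {a b : ℝ} (hne : ∀ t ∈ Ioo a b, φ' t ≠ 0) : InjOn φ (Ioo a b) := by
  intro s hs t ht hst
  by_contra hne'
  wlog hlt : s < t generalizing s t
  · exact this ht hs hst.symm (Ne.symm hne') (lt_of_le_of_ne (not_lt.1 hlt) (Ne.symm hne'))
  obtain ⟨c, hc, hc0⟩ := exists_hasDerivAt_eq_zero hlt
    (fun u _ => (hφ u).continuousAt.continuousWithinAt) hst (fun u _ => hφ u)
  exact hne c ⟨hs.1.trans hc.1, hc.2.trans ht.2⟩ hc0

theorem setLIntegral_comp_le_lintegral_mul_arcsineWeight {φ φ' : ℝ → ℝ}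
    (hφ : ∀ t, HasDerivAt φ (φ' t) t) (hpyth : ∀ t, φ' t ^ 2 + φ t ^ 2 = 1)
    {a b : ℝ} (hne : ∀ t ∈ Ioo a b, φ' t ≠ 0) (g : ℝ → ℝ≥0∞) :
    ∫⁻ t in Ioo a b, g (φ t) ≤ ∫⁻ y, g y * arcsineWeight y := by
  have hweight : ∀ t ∈ Ioo a b, ENNReal.ofReal |φ' t| * arcsineWeight (φ t) = 1 := by
    intro t ht
    have hsqrt : √(1 - φ t ^ 2) = |φ' t| := by
      rw [← Real.sqrt_sq_eq_abs, ← hpyth t, add_sub_cancel_right]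
    rw [arcsineWeight, hsqrt, ← ENNReal.ofReal_mul (abs_nonneg _),
      mul_inv_cancel₀ (abs_ne_zero.2 (hne t ht)), ENNReal.ofReal_one]
  calc ∫⁻ t in Ioo a b, g (φ t)
      = ∫⁻ t in Ioo a b, ENNReal.ofReal |φ' t| * (g (φ t) * arcsineWeight (φ t)) := by
        refine setLIntegral_congr_fun measurableSet_Ioo fun t ht => ?_
        rw [mul_left_comm, hweight t ht, mul_one]
    _ = ∫⁻ y in φ '' Ioo a b, g y * arcsineWeight y :=
        (lintegral_image_eq_lintegral_abs_deriv_mul measurableSet_Ioo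
          (fun t _ => (hφ t).hasDerivWithinAt) (injOn_Ioo_of_hasDerivAt_ne_zero hφ hne)
          fun y => g y * arcsineWeight y).symm
    _ ≤ ∫⁻ y, g y * arcsineWeight y := setLIntegral_le_lintegral _ _

theorem lintegral_Ioc_le_sum_Ioo (h : ℝ → ℝ≥0∞) (c : ℝ) (n : ℕ) :
    ∫⁻ t in Ioc 0 (n * c), h t ≤
      ∑ k ∈ Finset.range n, ∫⁻ t in Ioo (k * c) ((k + 1) * c), h t := by
  induction n with
  | zero => simp
  | succ n ih =>
    have hcover : Ioc 0 ((n + 1 : ℕ) * c) ⊆ Ioc 0 (n * c) ∪ Ioc (n * c) ((n + 1) * c) := by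
      intro t ht
      push_cast at ht
      rcases le_or_gt t (n * c) with h | h
      · exact Or.inl ⟨ht.1, h⟩
      · exact Or.inr ⟨h, ht.2⟩
    rw [Finset.sum_range_succ, setLIntegral_congr Ioo_ae_eq_Ioc]
    calc ∫⁻ t in Ioc 0 ((n + 1 : ℕ) * c), h t
        ≤ ∫⁻ t in Ioc 0 (n * c) ∪ Ioc (n * c) ((n + 1) * c), h t := lintegral_mono_set hcover
      _ ≤ _ := (lintegral_union_le _ _ _).trans (add_le_add ih le_rfl)

theorem sin_ne_zero_and_cos_ne_zero_of_mem_Ioo (k : ℕ) {t : ℝ}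
    (ht : t ∈ Ioo (k * (π / 2)) ((k + 1) * (π / 2))) : sin t ≠ 0 ∧ cos t ≠ 0 := by
  have hsin2 : sin (2 * t) ≠ 0 := by
    rw [Ne, Real.sin_eq_zero_iff]
    rintro ⟨n, hn⟩
    have h1 : (k : ℝ) < n := by nlinarith [ht.1, pi_pos]
    have h2 : (n : ℝ) < k + 1 := by nlinarith [ht.2, pi_pos]
    norm_cast at h1 h2
    omega
  rw [Real.sin_two_mul] at hsin2
  exact ⟨fun h => hsin2 (by simp [h]), fun h => hsin2 (by simp [h])⟩

theorem setLIntegral_Ioc_zero_two_pi_comp_le {φ φ' : ℝ → ℝ}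
    (hφ : ∀ t, HasDerivAt φ (φ' t) t) (hpyth : ∀ t, φ' t ^ 2 + φ t ^ 2 = 1)
    (hne : ∀ k : ℕ, ∀ t ∈ Ioo (k * (π / 2)) ((k + 1) * (π / 2)), φ' t ≠ 0) (g : ℝ → ℝ≥0∞) :
    ∫⁻ t in Ioc 0 (2 * π), g (φ t) ≤ 4 * ∫⁻ y, g y * arcsineWeight y :=
  calc ∫⁻ t in Ioc 0 (2 * π), g (φ t)
      = ∫⁻ t in Ioc 0 ((4 : ℕ) * (π / 2)), g (φ t) := by push_cast; ring_nf
    _ ≤ ∑ k ∈ Finset.range 4, ∫⁻ t in Ioo (k * (π / 2)) ((k + 1) * (π / 2)), g (φ t) :=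
        lintegral_Ioc_le_sum_Ioo _ _ 4
    _ ≤ ∑ _k ∈ Finset.range 4, ∫⁻ y, g y * arcsineWeight y :=
        Finset.sum_le_sum fun k _ =>
          setLIntegral_comp_le_lintegral_mul_arcsineWeight hφ hpyth (hne k) g
    _ = 4 * ∫⁻ y, g y * arcsineWeight y := by simp

theorem setLIntegral_Ioc_zero_two_pi_comp_sin_le (g : ℝ → ℝ≥0∞) :
    ∫⁻ t in Ioc 0 (2 * π), g (sin t) ≤ 4 * ∫⁻ y, g y * arcsineWeight y :=
  setLIntegral_Ioc_zero_two_pi_comp_le hasDerivAt_sin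
    (fun t => by rw [add_comm, sin_sq_add_cos_sq])
    (fun k _ ht => (sin_ne_zero_and_cos_ne_zero_of_mem_Ioo k ht).2) g

theorem setLIntegral_Ioc_zero_two_pi_comp_cos_le (g : ℝ → ℝ≥0∞) :
    ∫⁻ t in Ioc 0 (2 * π), g (cos t) ≤ 4 * ∫⁻ y, g y * arcsineWeight y :=
  setLIntegral_Ioc_zero_two_pi_comp_le hasDerivAt_cos
    (fun t => by rw [neg_sq, sin_sq_add_cos_sq])
    (fun k _ ht => neg_ne_zero.2 (sin_ne_zero_and_cos_ne_zero_of_mem_Ioo k ht).1) g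

theorem lintegral_indicator_one_mul {α : Type*} [MeasurableSpace α] {μ : Measure α} {s : Set α}
    (hs : MeasurableSet s) (f : α → ℝ≥0∞) :
    ∫⁻ x, s.indicator 1 x * f x ∂μ = ∫⁻ x in s, f x ∂μ := by
  rw [← lintegral_indicator hs]
  congr with x
  by_cases hx : x ∈ s <;> simp [hx]

theorem map_cos_restrict_Ioc_zero_two_pi_absolutelyContinuous :
    (volume.restrict (Ioc 0 (2 * π))).map cos ≪ volume :=
  Measure.AbsolutelyContinuous.mk fun s hs hs0 => by
    rw [Measure.map_apply measurable_cos hs, ← lintegral_indicator_one (measurable_cos hs),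
      ← nonpos_iff_eq_zero]
    calc ∫⁻ t in Ioc 0 (2 * π), s.indicator 1 (cos t)
        ≤ 4 * ∫⁻ y, s.indicator 1 y * arcsineWeight y :=
          setLIntegral_Ioc_zero_two_pi_comp_cos_le _
      _ = 0 := by rw [lintegral_indicator_one_mul hs, setLIntegral_measure_zero _ _ hs0, mul_zero]

theorem T2_indicator_le (f₁ : ℝ → ℝ) {F : Set ℝ} (hF : MeasurableSet F) (x : ℝ) :
    T2 f₁ (F.indicator fun _ => 1) x ≤
      20 * essSup (fun y => ENNReal.ofReal (f₁ y)) volume * volume F ^ (1 / 2 : ℝ) := by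
  set M := essSup (fun y => ENNReal.ofReal (f₁ y)) volume
  set E := (fun y => x - y) ⁻¹' F
  have hE : MeasurableSet E := hF.preimage (measurable_const.sub measurable_id)
  have hvolE : volume E = volume F :=
    (Measure.measurePreserving_sub_left volume x).measure_preimage hF.nullMeasurableSet
  have hind : ∀ y, ENNReal.ofReal (F.indicator (fun _ => 1) (x - y)) = E.indicator 1 y := by
    intro y
    by_cases hy : x - y ∈ F <;> simp [E, hy]
  have hf₁ : ∀ᵐ t ∂volume.restrict (Ioc 0 (2 * π)), ENNReal.ofReal (f₁ (x - cos t)) ≤ M :=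
    ae_of_ae_map measurable_cos.aemeasurable <|
      map_cos_restrict_Ioc_zero_two_pi_absolutelyContinuous.ae_le <|
        (Measure.measurePreserving_sub_left volume x).quasiMeasurePreserving.ae
          (ENNReal.ae_le_essSup _)
  have hsin : ∫⁻ t in Ioc 0 (2 * π), E.indicator 1 (sin t) ≤ 20 * volume F ^ (1 / 2 : ℝ) :=
    calc ∫⁻ t in Ioc 0 (2 * π), E.indicator 1 (sin t)
        ≤ 4 * ∫⁻ y, E.indicator 1 y * arcsineWeight y :=
          setLIntegral_Ioc_zero_two_pi_comp_sin_le _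
      _ ≤ 4 * (5 * volume E ^ (1 / 2 : ℝ)) := by
          rw [lintegral_indicator_one_mul hE]
          gcongr
          exact setLIntegral_arcsineWeight_le E
      _ = 20 * volume F ^ (1 / 2 : ℝ) := by rw [hvolE, ← mul_assoc]; norm_num
  have hinv : (ENNReal.ofReal (2 * π))⁻¹ ≤ 1 :=
    ENNReal.inv_le_one.2 (ENNReal.one_le_ofReal.2 (by linarith [pi_gt_three]))
  calc T2 f₁ (F.indicator fun _ => 1) x
      = (ENNReal.ofReal (2 * π))⁻¹ *
          ∫⁻ t in Ioc 0 (2 * π), ENNReal.ofReal (f₁ (x - cos t)) * E.indicator 1 (sin t) := by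
        simp only [T2, hind]
    _ ≤ 1 * ∫⁻ t in Ioc 0 (2 * π), M * E.indicator 1 (sin t) := by
        gcongr ?_ * ?_
        exact lintegral_mono_ae (hf₁.mono fun t ht => by gcongr)
    _ = M * ∫⁻ t in Ioc 0 (2 * π), E.indicator 1 (sin t) := by
        rw [one_mul]
        exact lintegral_const_mul M ((measurable_one.indicator hE).comp measurable_sin)
    _ ≤ 20 * M * volume F ^ (1 / 2 : ℝ) := by
        rw [mul_comm 20 M, mul_assoc]
        gcongr

theorem restricted_type_at_E :
    ∃ C : ℝ, 0 < C ∧ ∀ f₁ : ℝ → ℝ, Measurable f₁ → (∀ x, 0 ≤ f₁ x) →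
      ∀ F : Set ℝ, MeasurableSet F → volume F < ∞ →
      lpNorm ∞ (T2 f₁ (F.indicator fun _ => (1 : ℝ))) ≤ ENNReal.ofReal C *
        lpNorm ∞ (fun x => ENNReal.ofReal (f₁ x)) *
        volume F ^ ((1 : ℝ) / 2) := by
  refine ⟨20, by norm_num, fun f₁ _ _ F hF _ => ?_⟩
  simp only [_root_.lpNorm, if_true, ENNReal.ofReal_ofNat]
  exact essSup_le_of_ae_le _ (ae_of_all _ (T2_indicator_le f₁ hF))
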